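/- arXiv:1406.4279 — 2 statements merged into one kernel-verified Lean document; each statement's English description precedes it below -/
import Mathlib

section
/- There exists a decomposition of the complete tripartite graph K_{4,4,4} with parts {1,2,3,4}, {5,6,7,8}, {9,10,11,12} into 6 parallel classes: 1 perfect matching, 3 classes of 4 vertex-disjoint P_3's, and 2 classes of 3 vertex-disjoint P_4's each covering all 12 vertices. -/
/-- The edges of a path given by the list of its vertices in order. -/
def pathEdges {V : Type*} [DecidableEq V] (l : List V) : Finset (Sym2 V) :=
  ((l.zip l.tail).map (Function.uncurry Sym2.mk)).toFinset

/-- A parallel class of paths on `k` vertices in a graph `G`: a set of lists, each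
a path on `k` vertices of `G`, which are vertex-disjoint and cover every vertex. -/
def IsPathClass {V : Type*} (G : SimpleGraph V) (k : ℕ) (C : Finset (List V)) : Prop :=
  (∀ l ∈ C, l.length = k ∧ l.Nodup ∧ l.Chain' G.Adj) ∧
  ∀ x : V, ∃! l : List V, l ∈ C ∧ x ∈ l

/-- All edges used by a class of paths. -/
def classEdges {V : Type*} [DecidableEq V] (C : Finset (List V)) : Finset (Sym2 V) :=
  C.biUnion pathEdges

/-- A uniformly resolvable `(P₂,P₃,P₄)`-decomposition of `G` into `r` perfect matchings
(parallel classes of `P₂`), `s` parallel classes of `P₃` and `t` parallel classes of `P₄`: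
pairwise edge-disjoint classes whose edges together are exactly the edges of `G`. -/
def IsURD {V : Type*} [DecidableEq V] (G : SimpleGraph V) (r s t : ℕ) : Prop :=
  ∃ F : Fin r ⊕ Fin s ⊕ Fin t → Finset (List V),
    (∀ i, IsPathClass G (Sum.elim (fun _ => 2) (Sum.elim (fun _ => 3) (fun _ => 4)) i) (F i)) ∧
    (∀ i j, i ≠ j → Disjoint (classEdges (F i)) (classEdges (F j))) ∧
    (∀ e, e ∈ G.edgeSet ↔ ∃ i, e ∈ classEdges (F i))

/-- The complete tripartite graph `K_{4,4,4}`: vertices `(part, i)` with `part : Fin 3`,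
adjacent iff in different parts. -/
def K444 : SimpleGraph (Fin 3 × Fin 4) := SimpleGraph.comap Prod.fst ⊤

/-! The six parallel classes are those listed in the paper, and every property demanded of
them is a finite check. The only quantifier over an infinite type is the `∃!` over lists in
`IsPathClass`; since the candidate lists lie in the finite class, it becomes "exactly one path
of the class passes through the vertex", after which the kernel verifies the whole
decomposition by `decide`. -/

open Finset in
theorem isPathClass_iff_card_filter_eq_one {V : Type*} [DecidableEq V] (G : SimpleGraph V)
    (k : ℕ) (C : Finset (List V)) :
    IsPathClass G k C ↔
      (∀ l ∈ C, l.length = k ∧ l.Nodup ∧ l.IsChain G.Adj) ∧ ∀ x, #{l ∈ C | x ∈ l} = 1 := by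
  simp only [IsPathClass, card_eq_one_iff_existsUnique, mem_filter]
  rfl

instance {V : Type*} [Fintype V] [DecidableEq V] (G : SimpleGraph V) [DecidableRel G.Adj]
    (k : ℕ) (C : Finset (List V)) : Decidable (IsPathClass G k C) :=
  decidable_of_iff' _ (isPathClass_iff_card_filter_eq_one G k C)

instance : DecidableRel K444.Adj :=
  inferInstanceAs (DecidableRel (SimpleGraph.comap Prod.fst ⊤).Adj)

/-- Vertex `n ∈ {1, …, 12}` of the paper, whose parts are `{1,…,4}`, `{5,…,8}`, `{9,…,12}`. -/
def labelVertex (n : ℕ) : Fin 3 × Fin 4 :=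
  (Fin.ofNat 3 ((n - 1) / 4), Fin.ofNat 4 ((n - 1) % 4))

def labelledPaths (ls : List (List ℕ)) : Finset (List (Fin 3 × Fin 4)) :=
  (ls.map (List.map labelVertex)).toFinset

def k444Classes : Fin 1 ⊕ Fin 3 ⊕ Fin 2 → Finset (List (Fin 3 × Fin 4)) :=
  Sum.elim ![labelledPaths [[1, 6], [2, 5], [3, 10], [4, 9], [7, 12], [8, 11]]]
    (Sum.elim
      ![labelledPaths [[8, 1, 11], [7, 2, 12], [4, 5, 9], [3, 6, 10]],
        labelledPaths [[11, 3, 5], [12, 4, 6], [1, 7, 9], [2, 8, 10]],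
        labelledPaths [[6, 9, 8], [5, 10, 7], [2, 11, 4], [1, 12, 3]]]
      ![labelledPaths [[9, 1, 10, 4], [2, 6, 11, 5], [12, 8, 3, 7]],
        labelledPaths [[1, 5, 12, 6], [3, 9, 2, 10], [8, 4, 7, 11]]])

/-- `K_{4,4,4}` admits a uniformly resolvable decomposition into 6 parallel classes:
1 perfect matching, 3 classes of 4 vertex-disjoint `P₃`'s and 2 classes of 3
vertex-disjoint `P₄`'s. -/
theorem stmt12 : IsURD K444 1 3 2 :=
  ⟨k444Classes, by decide, by decide, by decide⟩
end

section
/- There exists a uniformly resolvable decomposition of the complete multipartite graph with 5 parts of size 2 (vertex set Z_10, parts {i, i+5}) into 6 perfect matchings and 1 parallel class consisting of 2 vertex-disjoint 5-cycles. -/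
/-- The edges of a cycle given by the list of its vertices in cyclic order. -/
def cycEdges {V : Type*} [DecidableEq V] (l : List V) : Finset (Sym2 V) :=
  ((l.zip (l.rotate 1)).map (Function.uncurry Sym2.mk)).toFinset

/-- A parallel class of cycles on `k` vertices in `G`: vertex-disjoint `k`-cycles
covering every vertex. -/
def IsCycleClass {V : Type*} (G : SimpleGraph V) (k : ℕ) (C : Finset (List V)) : Prop :=
  (∀ l ∈ C, l.length = k ∧ l.Nodup ∧ ∀ p ∈ l.zip (l.rotate 1), G.Adj p.1 p.2) ∧
  ∀ x : V, ∃! l : List V, l ∈ C ∧ x ∈ l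

/-- The edges of the `i`-th class, where the first `m` classes are matching (path)
classes and the last `n` classes are cycle classes. -/
def edgesOf {V : Type*} [DecidableEq V] {m n : ℕ}
    (F : Fin m ⊕ Fin n → Finset (List V)) : Fin m ⊕ Fin n → Finset (Sym2 V)
  | Sum.inl i => (F (Sum.inl i)).biUnion pathEdges
  | Sum.inr i => (F (Sum.inr i)).biUnion cycEdges

/-- The complete 5-partite graph of type `2⁵` on `Z₁₀`, with parts `{i, i+5}`:
two vertices are adjacent iff their residues modulo 5 differ. -/
def G25 : SimpleGraph (ZMod 10) :=
  SimpleGraph.comap (fun x => ZMod.castHom (show (5:ℕ) ∣ 10 by norm_num) (ZMod 5) x) ⊤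

/-- A uniformly resolvable decomposition of the complete 5-partite graph of type `2⁵`
into `r` perfect matchings and `t` parallel classes each consisting of 2
vertex-disjoint 5-cycles. -/
def IsURD25 (r t : ℕ) : Prop :=
  ∃ F : Fin r ⊕ Fin t → Finset (List (ZMod 10)),
    (∀ i : Fin r, IsPathClass G25 2 (F (Sum.inl i))) ∧
    (∀ i : Fin t, IsCycleClass G25 5 (F (Sum.inr i))) ∧
    (∀ i j, i ≠ j → Disjoint (edgesOf F i) (edgesOf F j)) ∧
    (∀ e, e ∈ G25.edgeSet ↔ ∃ i, e ∈ edgesOf F i)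

instance G25.decidableAdj : DecidableRel G25.Adj := fun _ _ =>
  inferInstanceAs (Decidable (_ ≠ _))

theorem Finset.existsUnique_mem_and_of_card_filter_eq_one {α : Type*} {C : Finset α}
    {p : α → Prop} [DecidablePred p] (h : (C.filter p).card = 1) : ∃! l, l ∈ C ∧ p l := by
  simpa only [Finset.mem_filter] using Finset.card_eq_one_iff_existsUnique.mp h

def urd25Classes : Fin 6 ⊕ Fin 1 → Finset (List (ZMod 10)) :=
  Sum.elim
    ![{[2,3], [4,5], [8,9], [0,6], [1,7]},
      {[1,2], [3,4], [5,6], [7,8], [9,0]},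
      {[0,3], [2,5], [4,7], [6,9], [8,1]},
      {[1,4], [3,6], [5,8], [7,0], [9,2]},
      {[0,4], [8,2], [1,5], [9,3], [6,7]},
      {[4,8], [2,6], [5,9], [3,7], [0,1]}]
    ![{[0,2,4,6,8], [1,3,5,7,9]}]

theorem isPathClass_urd25Classes (i : Fin 6) :
    IsPathClass G25 2 (urd25Classes (Sum.inl i)) := by
  refine ⟨fun l hl => ?_, fun x => Finset.existsUnique_mem_and_of_card_filter_eq_one ?_⟩
  · fin_cases i <;> fin_cases hl <;>
      exact ⟨rfl, by decide, List.isChain_pair.mpr (by decide)⟩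
  · revert x; fin_cases i <;> decide

theorem isCycleClass_urd25Classes (i : Fin 1) :
    IsCycleClass G25 5 (urd25Classes (Sum.inr i)) := by
  refine ⟨?_, fun x => Finset.existsUnique_mem_and_of_card_filter_eq_one ?_⟩
  · fin_cases i; decide
  · revert x; fin_cases i; decide

theorem disjoint_edgesOf_urd25Classes :
    ∀ i j, i ≠ j → Disjoint (edgesOf urd25Classes i) (edgesOf urd25Classes j) := by
  decide

theorem mem_edgeSet_G25_iff_exists_mem_edgesOf_urd25Classes :
    ∀ e, e ∈ G25.edgeSet ↔ ∃ i, e ∈ edgesOf urd25Classes i := by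
  decide

/-- The complete 5-partite graph of type `2⁵` admits a uniformly resolvable
decomposition into 6 perfect matchings and 1 parallel class consisting of 2
vertex-disjoint 5-cycles. -/
theorem stmt14 : IsURD25 6 1 :=
  ⟨urd25Classes, isPathClass_urd25Classes, isCycleClass_urd25Classes,
    disjoint_edgesOf_urd25Classes,
    mem_edgeSet_G25_iff_exists_mem_edgesOf_urd25Classes⟩
end
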